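/- Let k be a positive integer and let r_1, r_2, r_3, r_4 ∈ [0, 2π). There exist matrices H_1, H_2, H_3, H_4 ∈ SU(2) with tr(H_i) = 2 cos(r_i/2) satisfying H_4 H_3 H_2 H_1 = 1 if and only if there exists R ∈ [0, 2π) such that |r_1 - r_2| ≤ R ≤ min(r_1 + r_2, 4π - r_1 - r_2) and |r_3 - r_4| ≤ R ≤ min(r_3 + r_4, 4π - r_3 - r_4). -/

import Mathlib

/-!
Write an element of SU(2) as `[[a, b], [-b̄, ā]]` with `|a|² + |b|² = 1`, so that its trace is
`2 Re a`. If `tr H = 2 cos α` and `tr K = 2 cos β` with `α, β ∈ [0, π]`, then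
`½ tr (K H) = cos α cos β - ⟪u, v⟫` for vectors `u, v ∈ ℝ³` of lengths `sin α` and `sin β`, so by
Cauchy–Schwarz it lies in `[cos (α + β), cos (α - β)]`; conversely every value `cos γ` there is
attained, even with `K H = diag (e^{iγ}, e^{-iγ})`. Since `H₄ H₃ H₂ H₁ = 1` says that `H₂ H₁` is the
inverse of `H₄ H₃`, whose half-trace is the same real number, a solution exists iff the two intervals
meet. For angles in `[0, 2π]`, `cos (R / 2) ∈ [cos ((r + s) / 2), cos ((r - s) / 2)]` is exactly
`|r - s| ≤ R ≤ min (r + s) (4π - r - s)`, because `cos` is decreasing on `[0, π]`.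
-/

open Real Matrix
open ComplexConjugate

local notation "SU(2)" => Matrix.specialUnitaryGroup (Fin 2) ℂ

def su2Matrix (a b : ℂ) : Matrix (Fin 2) (Fin 2) ℂ :=
  !![a, b; -conj b, conj a]

section su2Matrix

variable (a b p q : ℂ)

lemma su2Matrix_mul :
    su2Matrix a b * su2Matrix p q = su2Matrix (a * p - b * conj q) (a * q + b * conj p) := by
  ext i j
  fin_cases i <;> fin_cases j <;> simp [su2Matrix] <;> ring

lemma su2Matrix_one_zero : su2Matrix 1 0 = 1 := by
  simp [su2Matrix, one_fin_two]

lemma star_su2Matrix : star (su2Matrix a b) = su2Matrix (conj a) (-b) := by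
  ext i j
  fin_cases i <;> fin_cases j <;> simp [su2Matrix, star_apply]

lemma trace_su2Matrix : (su2Matrix a b).trace = (2 * a.re : ℝ) := by
  simp [su2Matrix, trace_fin_two, Complex.add_conj]

lemma det_su2Matrix : (su2Matrix a b).det = (Complex.normSq a + Complex.normSq b : ℝ) := by
  simp only [su2Matrix, det_fin_two_of, mul_neg, sub_neg_eq_add, Complex.mul_conj]
  push_cast; ring

lemma su2Matrix_mem_iff :
    su2Matrix a b ∈ SU(2) ↔ Complex.normSq a + Complex.normSq b = 1 := by
  rw [mem_specialUnitaryGroup_iff, mem_unitaryGroup_iff', det_su2Matrix]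
  refine ⟨fun h => mod_cast h.2, fun h => ⟨?_, by simp [h]⟩⟩
  rw [star_su2Matrix, su2Matrix_mul, ← su2Matrix_one_zero]
  congr 1
  · rw [mul_comm, Complex.mul_conj, neg_mul, sub_neg_eq_add, Complex.mul_conj]
    exact_mod_cast h
  · ring

end su2Matrix

lemma exists_eq_su2Matrix {H : Matrix (Fin 2) (Fin 2) ℂ} (hH : H ∈ SU(2)) :
    ∃ a b, H = su2Matrix a b := by
  obtain ⟨hU, hdet⟩ := mem_specialUnitaryGroup_iff.1 hH
  have hstar : star H = H.adjugate := by
    rw [← inv_eq_left_inv (mem_unitaryGroup_iff'.1 hU), inv_def, hdet, Ring.inverse_one, one_smul]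
  have h10 := congrFun₂ hstar 1 0
  have h11 := congrFun₂ hstar 1 1
  simp only [star_apply, adjugate_fin_two, RCLike.star_def, of_apply, cons_val', cons_val_zero,
    cons_val_fin_one, cons_val_one] at h10 h11
  have h10' : H 1 0 = -conj (H 0 1) := by rw [h10, neg_neg]
  have h11' : H 1 1 = conj (H 0 0) := by rw [← h11, Complex.conj_conj]
  refine ⟨H 0 0, H 0 1, ?_⟩
  ext i j
  fin_cases i <;> fin_cases j <;> simp [su2Matrix, h10', h11']

lemma star_mem_specialUnitaryGroup {H : Matrix (Fin 2) (Fin 2) ℂ} (hH : H ∈ SU(2)) :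
    star H ∈ SU(2) :=
  (star (⟨H, hH⟩ : SU(2))).2

lemma abs_mul_add_mul_add_mul_le {x₁ x₂ x₃ y₁ y₂ y₃ A B : ℝ} (hA : 0 ≤ A) (hB : 0 ≤ B)
    (hx : x₁ ^ 2 + x₂ ^ 2 + x₃ ^ 2 = A ^ 2) (hy : y₁ ^ 2 + y₂ ^ 2 + y₃ ^ 2 = B ^ 2) :
    |x₁ * y₁ + x₂ * y₂ + x₃ * y₃| ≤ A * B := by
  refine abs_le_of_sq_le_sq ?_ (mul_nonneg hA hB)
  rw [mul_pow, ← hx, ← hy]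
  nlinarith [sq_nonneg (x₁ * y₂ - x₂ * y₁), sq_nonneg (x₁ * y₃ - x₃ * y₁),
    sq_nonneg (x₂ * y₃ - x₃ * y₂)]

lemma re_eq_cos_of_trace_eq {a b : ℂ} {α : ℝ} (h : (su2Matrix a b).trace = (2 * cos α : ℝ)) :
    a.re = cos α := by
  rw [trace_su2Matrix, Complex.ofReal_inj] at h
  linarith

lemma re_trace_mul_div_two_mem_Icc {H K : Matrix (Fin 2) (Fin 2) ℂ} {α β : ℝ}
    (hH : H ∈ SU(2)) (hK : K ∈ SU(2))
    (trH : H.trace = (2 * cos α : ℝ)) (trK : K.trace = (2 * cos β : ℝ))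
    (hα : 0 ≤ sin α) (hβ : 0 ≤ sin β) :
    (K * H).trace.re / 2 ∈ Set.Icc (cos (α + β)) (cos (α - β)) := by
  obtain ⟨a, b, rfl⟩ := exists_eq_su2Matrix hH
  obtain ⟨p, q, rfl⟩ := exists_eq_su2Matrix hK
  rw [su2Matrix_mem_iff, Complex.normSq_apply, Complex.normSq_apply] at hH hK
  have ha := re_eq_cos_of_trace_eq trH
  have hp := re_eq_cos_of_trace_eq trK
  rw [ha] at hH
  rw [hp] at hK
  have hsa : a.im ^ 2 + b.re ^ 2 + b.im ^ 2 = sin α ^ 2 := by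
    linear_combination hH - sin_sq_add_cos_sq α
  have hsp : p.im ^ 2 + q.re ^ 2 + q.im ^ 2 = sin β ^ 2 := by
    linear_combination hK - sin_sq_add_cos_sq β
  have hdot := abs_le.1 (abs_mul_add_mul_add_mul_le hα hβ hsa hsp)
  rw [su2Matrix_mul, trace_su2Matrix, Complex.ofReal_re, cos_add, cos_sub]
  simp only [Complex.sub_re, Complex.mul_re, Complex.conj_re, Complex.conj_im, ha, hp]
  constructor <;> nlinarith

lemma exists_mul_eq_su2Matrix_exp {α β γ : ℝ}
    (h : cos β ∈ Set.uIcc (cos (α + γ)) (cos (α - γ))) :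
    ∃ H ∈ SU(2), ∃ K ∈ SU(2), H.trace = (2 * cos α : ℝ) ∧ K.trace = (2 * cos β : ℝ) ∧
      K * H = su2Matrix (Complex.exp (γ * Complex.I)) 0 := by
  -- `H` has top-left entry `cos α + t i` and `K = D H⋆`, so that `½ tr K = f t`.
  set f : ℝ → ℝ := fun t => cos γ * cos α + sin γ * t
  have hf : Set.uIcc (f (-sin α)) (f (sin α)) = Set.uIcc (cos (α + γ)) (cos (α - γ)) := by
    simp only [f, cos_add, cos_sub]
    congr 1 <;> ring
  obtain ⟨t, ht, hft⟩ := intermediate_value_uIcc (f := f) (by fun_prop) (hf ▸ h)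
  have ht2 : t ^ 2 ≤ sin α ^ 2 := by
    rcases Set.mem_uIcc.1 ht with ht | ht <;> nlinarith
  set D := su2Matrix (Complex.exp (γ * Complex.I)) 0
  set H := su2Matrix ⟨cos α, t⟩ (√(sin α ^ 2 - t ^ 2) : ℝ)
  have hH : H ∈ SU(2) := by
    rw [su2Matrix_mem_iff, Complex.normSq_apply, Complex.normSq_ofReal,
      Real.mul_self_sqrt (by linarith)]
    nlinarith [sin_sq_add_cos_sq α]
  have hD : D ∈ SU(2) := by
    rw [su2Matrix_mem_iff, Complex.normSq_eq_norm_sq, Complex.norm_exp_ofReal_mul_I]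
    simp
  refine ⟨H, hH, D * star H, mul_mem hD (star_mem_specialUnitaryGroup hH), ?_, ?_, ?_⟩
  · rw [trace_su2Matrix]
  · rw [star_su2Matrix, su2Matrix_mul, trace_su2Matrix, ← hft]
    simp [f, Complex.exp_ofReal_mul_I_re, Complex.exp_ofReal_mul_I_im]
  · rw [mul_assoc, mem_unitaryGroup_iff'.1 (mem_specialUnitaryGroup_iff.1 hH).1, mul_one]

/-- `a / 2`, `b / 2`, `c / 2` are the sides of a possibly degenerate spherical triangle: the three
triangle inequalities together with `a / 2 + b / 2 + c / 2 ≤ 2π`. -/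
def SphericalTriangle (a b c : ℝ) : Prop :=
  |a - b| ≤ c ∧ c ≤ min (a + b) (4 * π - a - b)

lemma SphericalTriangle.swap {a b c : ℝ} (h : SphericalTriangle a b c) :
    SphericalTriangle a c b := by
  obtain ⟨h₁, h₂⟩ := h
  rw [SphericalTriangle, abs_le, le_min_iff] at *
  refine ⟨⟨?_, ?_⟩, ?_, ?_⟩ <;> linarith

lemma cos_half_le_cos_half_iff {u v : ℝ} (hu : u ∈ Set.Icc 0 (2 * π))
    (hv : v ∈ Set.Icc 0 (2 * π)) : cos (v / 2) ≤ cos (u / 2) ↔ u ≤ v := by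
  rw [strictAntiOn_cos.le_iff_ge ⟨by linarith [hv.1], by linarith [hv.2]⟩
    ⟨by linarith [hu.1], by linarith [hu.2]⟩]
  exact div_le_div_iff_of_pos_right two_pos

lemma sphericalTriangle_iff_cos_half_mem_Icc {a b c : ℝ} (ha : a ∈ Set.Icc 0 (2 * π))
    (hb : b ∈ Set.Icc 0 (2 * π)) (hc : c ∈ Set.Icc 0 (2 * π)) :
    SphericalTriangle a b c ↔ cos (c / 2) ∈ Set.Icc (cos (a / 2 + b / 2)) (cos (a / 2 - b / 2)) := by
  obtain ⟨ha₀, ha₁⟩ := ha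
  obtain ⟨hb₀, hb₁⟩ := hb
  have habs : |a - b| ∈ Set.Icc 0 (2 * π) :=
    ⟨abs_nonneg _, abs_le.2 ⟨by linarith, by linarith⟩⟩
  have hmin : min (a + b) (4 * π - a - b) ∈ Set.Icc 0 (2 * π) :=
    ⟨le_min (by linarith) (by linarith),
      min_le_iff.2 ((le_total (a + b) (2 * π)).imp id fun _ => by linarith)⟩
  have hcos_abs : cos (|a - b| / 2) = cos (a / 2 - b / 2) := by
    rw [← cos_abs (a / 2 - b / 2), ← sub_div, abs_div, abs_two]
  have hcos_min : cos (min (a + b) (4 * π - a - b) / 2) = cos (a / 2 + b / 2) := by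
    rcases min_cases (a + b) (4 * π - a - b) with ⟨h, -⟩ | ⟨h, -⟩ <;> rw [h]
    · rw [add_div]
    · rw [show (4 * π - a - b) / 2 = 2 * π - (a / 2 + b / 2) by ring, cos_two_pi_sub]
  rw [SphericalTriangle, ← cos_half_le_cos_half_iff habs hc, ← cos_half_le_cos_half_iff hc hmin,
    hcos_abs, hcos_min, and_comm, Set.mem_Icc]

lemma SphericalTriangle.cos_half_mem_uIcc {a b c : ℝ} (h : SphericalTriangle a b c)
    (ha : a ∈ Set.Icc 0 (2 * π)) (hb : b ∈ Set.Icc 0 (2 * π)) (hc : c ∈ Set.Icc 0 (2 * π)) :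
    cos (b / 2) ∈ Set.uIcc (cos (a / 2 + c / 2)) (cos (a / 2 - c / 2)) :=
  Set.Icc_subset_uIcc ((sphericalTriangle_iff_cos_half_mem_Icc ha hc hb).1 h.swap)

lemma neg_one_lt_cos_half_sub_half {a b : ℝ} (ha : a ∈ Set.Ico 0 (2 * π))
    (hb : b ∈ Set.Ico 0 (2 * π)) : -1 < cos (a / 2 - b / 2) := by
  rw [← cos_abs, ← cos_pi]
  exact cos_lt_cos_of_nonneg_of_le_pi (abs_nonneg _) le_rfl
    (abs_lt.2 ⟨by linarith [ha.1, hb.2], by linarith [ha.2, hb.1]⟩)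

lemma exists_sphericalTriangle_of_mem_Icc {a b c d x : ℝ} (ha : a ∈ Set.Ico 0 (2 * π))
    (hb : b ∈ Set.Ico 0 (2 * π)) (hc : c ∈ Set.Ico 0 (2 * π)) (hd : d ∈ Set.Ico 0 (2 * π))
    (hab : x ∈ Set.Icc (cos (a / 2 + b / 2)) (cos (a / 2 - b / 2)))
    (hcd : x ∈ Set.Icc (cos (c / 2 + d / 2)) (cos (c / 2 - d / 2))) :
    ∃ R ∈ Set.Ico 0 (2 * π), SphericalTriangle a b R ∧ SphericalTriangle c d R := by
  -- `x` may be `-1 = cos π`, which gives no `R < 2π`; the largest common value is `> -1`.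
  set y := min (cos (a / 2 - b / 2)) (cos (c / 2 - d / 2))
  have hy : -1 < y :=
    lt_min (neg_one_lt_cos_half_sub_half ha hb) (neg_one_lt_cos_half_sub_half hc hd)
  have hcos : cos (2 * arccos y / 2) = y := by
    rw [mul_div_cancel_left₀ _ two_ne_zero,
      cos_arccos hy.le ((min_le_left _ _).trans (cos_le_one _))]
  have hR : 2 * arccos y ∈ Set.Ico 0 (2 * π) :=
    ⟨mul_nonneg zero_le_two (arccos_nonneg y), by linarith [arccos_lt_pi.2 hy]⟩
  have hR' := Set.Ico_subset_Icc_self hR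
  refine ⟨2 * arccos y, hR, ?_, ?_⟩
  · rw [sphericalTriangle_iff_cos_half_mem_Icc (Set.Ico_subset_Icc_self ha)
      (Set.Ico_subset_Icc_self hb) hR', hcos]
    exact ⟨hab.1.trans (le_min hab.2 hcd.2), min_le_left _ _⟩
  · rw [sphericalTriangle_iff_cos_half_mem_Icc (Set.Ico_subset_Icc_self hc)
      (Set.Ico_subset_Icc_self hd) hR', hcos]
    exact ⟨hcd.1.trans (le_min hab.2 hcd.2), min_le_right _ _⟩

theorem su2_product_trace_condition_general
    (r : Fin 4 → ℝ) (hr : ∀ i, r i ∈ Set.Ico 0 (2 * π)) :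
    (∃ H : Fin 4 → Matrix (Fin 2) (Fin 2) ℂ,
        (∀ i, H i ∈ Matrix.specialUnitaryGroup (Fin 2) ℂ) ∧
        (∀ i, (H i).trace = (2 * Real.cos (r i / 2) : ℝ)) ∧
        H 3 * H 2 * H 1 * H 0 = 1)
    ↔ (∃ R ∈ Set.Ico 0 (2 * π),
        |r 0 - r 1| ≤ R ∧ R ≤ min (r 0 + r 1) (4 * π - r 0 - r 1) ∧
        |r 2 - r 3| ≤ R ∧ R ≤ min (r 2 + r 3) (4 * π - r 2 - r 3)) := by
  have hr' i : r i ∈ Set.Icc 0 (2 * π) := Set.Ico_subset_Icc_self (hr i)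
  constructor
  · rintro ⟨H, hH, htr, hprod⟩
    have hsin i : 0 ≤ sin (r i / 2) :=
      sin_nonneg_of_nonneg_of_le_pi (by linarith [(hr i).1]) (by linarith [(hr i).2])
    have hinv : H 3 * H 2 = star (H 1 * H 0) :=
      left_inv_eq_right_inv (by simpa only [mul_assoc] using hprod)
        (mem_unitaryGroup_iff.1 (mul_mem (hH 1) (hH 0)).1)
    have hre : (H 3 * H 2).trace.re = (H 1 * H 0).trace.re := by
      rw [hinv, star_eq_conjTranspose, trace_conjTranspose, Complex.star_def, Complex.conj_re]
    obtain ⟨R, hR, h01, h23⟩ := exists_sphericalTriangle_of_mem_Icc (hr 0) (hr 1) (hr 2) (hr 3)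
      (re_trace_mul_div_two_mem_Icc (hH 0) (hH 1) (htr 0) (htr 1) (hsin 0) (hsin 1))
      (hre ▸ re_trace_mul_div_two_mem_Icc (hH 2) (hH 3) (htr 2) (htr 3) (hsin 2) (hsin 3))
    exact ⟨R, hR, h01.1, h01.2, h23.1, h23.2⟩
  · rintro ⟨R, hR, h01l, h01u, h23l, h23u⟩
    have hR' := Set.Ico_subset_Icc_self hR
    obtain ⟨H₀, hH₀, H₁, hH₁, tr₀, tr₁, hH₁₀⟩ := exists_mul_eq_su2Matrix_exp (γ := R / 2)
      (SphericalTriangle.cos_half_mem_uIcc ⟨h01l, h01u⟩ (hr' 0) (hr' 1) hR')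
    obtain ⟨H₂, hH₂, H₃, hH₃, tr₂, tr₃, hH₃₂⟩ := exists_mul_eq_su2Matrix_exp (γ := -(R / 2))
      (by simpa [Set.uIcc_comm, ← sub_eq_add_neg] using
        SphericalTriangle.cos_half_mem_uIcc ⟨h23l, h23u⟩ (hr' 2) (hr' 3) hR')
    refine ⟨![H₀, H₁, H₂, H₃], fun i => by fin_cases i <;> assumption,
      fun i => by fin_cases i <;> assumption, ?_⟩
    show H₃ * H₂ * H₁ * H₀ = 1
    rw [mul_assoc (H₃ * H₂), hH₃₂, hH₁₀, su2Matrix_mul, ← su2Matrix_one_zero]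
    simp [← Complex.exp_add]

theorem su2_product_trace_condition (k : ℕ) (hk : 0 < k)
    (r : Fin 4 → ℝ) (hr : ∀ i, r i ∈ Set.Ico 0 (2 * π)) :
    (∃ H : Fin 4 → Matrix (Fin 2) (Fin 2) ℂ,
        (∀ i, H i ∈ Matrix.specialUnitaryGroup (Fin 2) ℂ) ∧
        (∀ i, (H i).trace = (2 * Real.cos (r i / 2) : ℝ)) ∧
        H 3 * H 2 * H 1 * H 0 = 1)
    ↔ (∃ R ∈ Set.Ico 0 (2 * π),
        |r 0 - r 1| ≤ R ∧ R ≤ min (r 0 + r 1) (4 * π - r 0 - r 1) ∧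
        |r 2 - r 3| ≤ R ∧ R ≤ min (r 2 + r 3) (4 * π - r 2 - r 3)) :=
  su2_product_trace_condition_general r hr
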